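/- If C = (1, c₂, c₃, c₄, c₅, c₆) is canonical and the subsystem C' = (1, c₂, c₃, c₄, c₅) is noncanonical, then c₆ equals 2c₅ − c₂, 2c₅ − c₃, or 2c₅ − c₄. -/

import Mathlib

open Finset

/-- `x` is a representation of value `v` in the coin system `c 1, …, c n`. -/
def IsRepr (n : ℕ) (c : ℕ → ℕ) (v : ℕ) (x : ℕ → ℕ) : Prop :=
  ∑ i ∈ Finset.Icc 1 n, c i * x i = v

/-- Minimum number of coins over all representations of `v`. -/
noncomputable def opt (n : ℕ) (c : ℕ → ℕ) (v : ℕ) : ℕ :=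
  sInf {k | ∃ x : ℕ → ℕ, IsRepr n c v x ∧ ∑ i ∈ Finset.Icc 1 n, x i = k}

/-- Number of coins used by the greedy algorithm to pay `v`. -/
def grd (n : ℕ) (c : ℕ → ℕ) (v : ℕ) : ℕ :=
  if hv : v = 0 then 0
  else
    let m := ((Finset.Icc 1 n).filter (fun i => c i ≤ v)).sup c
    if hm : 0 < m then grd n c (v - m) + 1 else 0
termination_by v
decreasing_by omega

/-- The system is canonical: greedy is optimal for every positive value. -/
def Canonical (n : ℕ) (c : ℕ → ℕ) : Prop :=
  ∀ v, 0 < v → opt n c v = grd n c v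

/-- `w` is a counterexample to the system. -/
def IsCex (n : ℕ) (c : ℕ → ℕ) (w : ℕ) : Prop :=
  0 < w ∧ opt n c w < grd n c w

/-- `w` is the minimum counterexample to the system. -/
def MinCex (n : ℕ) (c : ℕ → ℕ) (w : ℕ) : Prop :=
  IsCex n c w ∧ ∀ u, IsCex n c u → w ≤ u

/-- A (currency) system: first coin is `1` and coins strictly increase. -/
def IsSystem (n : ℕ) (c : ℕ → ℕ) : Prop :=
  c 1 = 1 ∧ StrictMonoOn c (Set.Icc 1 n)

/-!
Let `w` be the least counterexample of the five-coin subsystem. Below `c 6` the two systems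
have the same greedy and optimal coin counts, so canonicity of the six-coin system gives
`c 6 ≤ w`, while the classical bound on least counterexamples gives `w < c 4 + c 5`. Hence
`c 6 < 2 * c 5`: greedy pays `2 * c 5` with `c 6` followed by the remainder `2 * c 5 - c 6`, and
since two coins suffice, canonicity forces that remainder to be a single coin `c j`. The bounds
`c 5 - c 4 < 2 * c 5 - c 6 < c 5` then place `j` between `2` and `4`.
-/

section

variable {n : ℕ} {c : ℕ → ℕ}

theorem sum_mul_add_single {s : Finset ℕ} {j : ℕ} (x : ℕ → ℕ) (hj : j ∈ s) :
    ∑ i ∈ s, c i * (x + Pi.single j 1 : ℕ → ℕ) i = ∑ i ∈ s, c i * x i + c j := by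
  simp [mul_add, Finset.sum_add_distrib, Pi.single_apply, hj]

theorem sum_add_single {s : Finset ℕ} {j : ℕ} (x : ℕ → ℕ) (hj : j ∈ s) :
    ∑ i ∈ s, (x + Pi.single j 1 : ℕ → ℕ) i = ∑ i ∈ s, x i + 1 := by
  simp [Finset.sum_add_distrib, Pi.single_apply, hj]

theorem opt_le_of_isRepr {v : ℕ} {x : ℕ → ℕ} (h : IsRepr n c v x) :
    opt n c v ≤ ∑ i ∈ Icc 1 n, x i :=
  Nat.sInf_le ⟨x, h, rfl⟩

theorem opt_zero : opt n c 0 = 0 :=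
  Nat.le_zero.mp <| opt_le_of_isRepr (x := 0) (by simp [IsRepr]) |>.trans_eq (by simp)

theorem exists_isRepr_sum_eq_opt (hn : 1 ≤ n) (h1 : c 1 = 1) (v : ℕ) :
    ∃ x, IsRepr n c v x ∧ ∑ i ∈ Icc 1 n, x i = opt n c v := by
  have hv : IsRepr n c v (v • Pi.single 1 1) := by simp [IsRepr, Pi.single_apply, hn, h1]
  exact Nat.sInf_mem (s := {k | ∃ x, IsRepr n c v x ∧ ∑ i ∈ Icc 1 n, x i = k})
    ⟨_, _, hv, rfl⟩

theorem opt_add_coin_le (hn : 1 ≤ n) (h1 : c 1 = 1) {j : ℕ} (hj : j ∈ Icc 1 n) (v : ℕ) :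
    opt n c (v + c j) ≤ opt n c v + 1 := by
  obtain ⟨x, hx, hxs⟩ := exists_isRepr_sum_eq_opt hn h1 v
  calc opt n c (v + c j) ≤ ∑ i ∈ Icc 1 n, (x + Pi.single j 1 : ℕ → ℕ) i :=
        opt_le_of_isRepr (by rw [IsRepr, sum_mul_add_single x hj, hx])
    _ = opt n c v + 1 := by rw [sum_add_single x hj, hxs]

theorem exists_coin_opt_sub_add_one_eq (hn : 1 ≤ n) (h1 : c 1 = 1) {v : ℕ} (hv : 0 < v) :
    ∃ j ∈ Icc 1 n, c j ≤ v ∧ opt n c (v - c j) + 1 = opt n c v := by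
  obtain ⟨x, hx, hxs⟩ := exists_isRepr_sum_eq_opt hn h1 v
  obtain ⟨j, hj, hxj⟩ : ∃ j ∈ Icc 1 n, x j ≠ 0 := by
    by_contra! h
    rw [IsRepr, Finset.sum_eq_zero fun i hi => by rw [h i hi, mul_zero]] at hx
    omega
  set y : ℕ → ℕ := x - Pi.single j 1
  have hxy : x = y + Pi.single j 1 := by
    ext i
    by_cases hij : i = j
    · subst hij
      simp only [y, Pi.add_apply, Pi.sub_apply, Pi.single_eq_same]
      omega
    · simp [y, hij]
  set u := ∑ i ∈ Icc 1 n, c i * y i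
  have hvu : v = u + c j := by rw [← sum_mul_add_single y hj, ← hxy, ← hx]
  have hcount : ∑ i ∈ Icc 1 n, x i = ∑ i ∈ Icc 1 n, y i + 1 := by
    rw [← sum_add_single y hj, ← hxy]
  have hu_le : opt n c u ≤ ∑ i ∈ Icc 1 n, y i := opt_le_of_isRepr rfl
  have hv_le := opt_add_coin_le hn h1 hj u
  rw [← hvu] at hv_le
  refine ⟨j, hj, by omega, ?_⟩
  rw [hvu, Nat.add_sub_cancel, ← hvu]
  omega

theorem grd_zero : grd n c 0 = 0 := by
  rw [grd]; simp

theorem grd_eq_grd_sub_add_one {j v : ℕ} (hj : j ∈ Icc 1 n) (hjv : c j ≤ v) (hj0 : 0 < c j)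
    (hmax : ∀ i ∈ Icc 1 n, c i ≤ v → c i ≤ c j) :
    grd n c v = grd n c (v - c j) + 1 := by
  have hsup : ((Icc 1 n).filter (fun i => c i ≤ v)).sup c = c j :=
    le_antisymm (Finset.sup_le fun i hi => hmax i (mem_filter.mp hi).1 (mem_filter.mp hi).2)
      (Finset.le_sup (mem_filter.mpr ⟨hj, hjv⟩))
  rw [grd]
  simp [hsup, hj0, show v ≠ 0 by omega]

theorem exists_coin_grd_eq_grd_sub_add_one (hn : 1 ≤ n) (h1 : c 1 = 1) {v : ℕ} (hv : 0 < v) :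
    ∃ j ∈ Icc 1 n, 0 < c j ∧ c j ≤ v ∧ grd n c v = grd n c (v - c j) + 1 := by
  have h1mem : 1 ∈ (Icc 1 n).filter (fun i => c i ≤ v) := by
    simp only [mem_filter, mem_Icc, h1]
    omega
  obtain ⟨j, hj, hjsup⟩ := Finset.exists_mem_eq_sup _ ⟨1, h1mem⟩ c
  have hc1 := Finset.le_sup (f := c) h1mem
  rw [mem_filter] at hj
  refine ⟨j, hj.1, by omega, hj.2,
    grd_eq_grd_sub_add_one hj.1 hj.2 (by omega) fun i hi hiv => ?_⟩
  exact hjsup ▸ Finset.le_sup (mem_filter.mpr ⟨hi, hiv⟩)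

theorem grd_pos (hn : 1 ≤ n) (h1 : c 1 = 1) {v : ℕ} (hv : 0 < v) : 0 < grd n c v := by
  obtain ⟨j, -, -, -, h⟩ := exists_coin_grd_eq_grd_sub_add_one hn h1 hv
  omega

theorem opt_le_grd (hn : 1 ≤ n) (h1 : c 1 = 1) (v : ℕ) : opt n c v ≤ grd n c v := by
  induction v using Nat.strong_induction_on with
  | _ v ih =>
    rcases Nat.eq_zero_or_pos v with rfl | hv
    · rw [opt_zero, grd_zero]
    obtain ⟨j, hj, hj0, hjv, hgrd⟩ := exists_coin_grd_eq_grd_sub_add_one hn h1 hv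
    have hopt := opt_add_coin_le hn h1 hj (v - c j)
    rw [Nat.sub_add_cancel hjv] at hopt
    have := ih (v - c j) (by omega)
    omega

theorem exists_coin_eq_of_grd_eq_one (hn : 1 ≤ n) (h1 : c 1 = 1) {v : ℕ} (hv : 0 < v)
    (h : grd n c v = 1) : ∃ j ∈ Icc 1 n, c j = v := by
  obtain ⟨j, hj, -, hjv, hgrd⟩ := exists_coin_grd_eq_grd_sub_add_one hn h1 hv
  refine ⟨j, hj, le_antisymm hjv (not_lt.mp fun hlt => ?_)⟩
  have := grd_pos hn h1 (Nat.sub_pos_of_lt hlt)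
  omega

theorem grd_succ_of_lt {v : ℕ} (hv : v < c (n + 1)) : grd (n + 1) c v = grd n c v := by
  induction v using Nat.strong_induction_on with
  | _ v ih =>
    have hfilter :
        (Icc 1 (n + 1)).filter (fun i => c i ≤ v) = (Icc 1 n).filter (fun i => c i ≤ v) := by
      rw [← Finset.insert_Icc_right_eq_Icc_add_one (by omega), filter_insert, if_neg (by omega)]
    rcases Nat.eq_zero_or_pos v with rfl | hv0
    · rw [grd_zero, grd_zero]
    rw [grd, grd, hfilter]
    simp only [dif_neg hv0.ne']
    split_ifs
    · rw [ih _ (by omega) (by omega)]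
    · rfl

theorem isRepr_succ_iff_of_lt {v : ℕ} {x : ℕ → ℕ} (hv : v < c (n + 1)) :
    IsRepr (n + 1) c v x ↔ IsRepr n c v x ∧ x (n + 1) = 0 := by
  rw [IsRepr, IsRepr, Finset.sum_Icc_succ_top (by omega)]
  constructor
  · intro h
    have hx : x (n + 1) = 0 := by
      by_contra hx
      have := Nat.le_mul_of_pos_right (c (n + 1)) (Nat.pos_of_ne_zero hx)
      omega
    simpa [hx] using h
  · rintro ⟨h, hx⟩
    simpa [hx] using h

theorem opt_succ_of_lt {v : ℕ} (hv : v < c (n + 1)) : opt (n + 1) c v = opt n c v := by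
  unfold opt
  congr 1
  ext k
  constructor
  · rintro ⟨x, hx, rfl⟩
    obtain ⟨hx, hx0⟩ := (isRepr_succ_iff_of_lt hv).mp hx
    exact ⟨x, hx, by rw [Finset.sum_Icc_succ_top (by omega), hx0, add_zero]⟩
  · rintro ⟨x, hx, rfl⟩
    have hupd : ∀ i ∈ Icc 1 n, Function.update x (n + 1) 0 i = x i := fun i hi =>
      Function.update_of_ne (by rw [mem_Icc] at hi; omega) _ _
    refine ⟨Function.update x (n + 1) 0, (isRepr_succ_iff_of_lt hv).mpr ⟨?_, by simp⟩, ?_⟩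
    · rw [IsRepr, ← hx]
      exact Finset.sum_congr rfl fun i hi => by rw [hupd i hi]
    · rw [Finset.sum_Icc_succ_top (by omega), Function.update_self, add_zero]
      exact Finset.sum_congr rfl hupd

theorem IsCex.le_of_canonical_succ {w : ℕ} (hw : IsCex n c w) (hC : Canonical (n + 1) c) :
    c (n + 1) ≤ w := by
  by_contra! h
  have := hC w hw.1
  rw [opt_succ_of_lt h, grd_succ_of_lt h] at this
  exact hw.2.ne this

theorem exists_minCex_of_not_canonical (hn : 1 ≤ n) (h1 : c 1 = 1) (h : ¬Canonical n c) :
    ∃ w, MinCex n c w := by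
  simp only [Canonical, not_forall] at h
  obtain ⟨v, hv, hne⟩ := h
  have hcex : IsCex n c v := ⟨hv, lt_of_le_of_ne (opt_le_grd hn h1 v) hne⟩
  exact ⟨sInf {u | IsCex n c u}, Nat.sInf_mem (s := {u | IsCex n c u}) ⟨v, hcex⟩,
    fun u hu => Nat.sInf_le hu⟩

theorem MinCex.opt_eq_grd_of_lt (hn : 1 ≤ n) (h1 : c 1 = 1) {w u : ℕ} (hw : MinCex n c w)
    (hu : u < w) : opt n c u = grd n c u := by
  rcases Nat.eq_zero_or_pos u with rfl | hu0
  · rw [opt_zero, grd_zero]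
  by_contra hne
  have := hw.2 u ⟨hu0, lt_of_le_of_ne (opt_le_grd hn h1 u) hne⟩
  omega

theorem IsSystem.coin_le_coin (h : IsSystem n c) {i j : ℕ} (hi : 1 ≤ i) (hij : i ≤ j)
    (hj : j ≤ n) : c i ≤ c j :=
  h.2.monotoneOn ⟨hi, hij.trans hj⟩ ⟨hi.trans hij, hj⟩ hij

theorem IsSystem.coin_lt_coin (h : IsSystem n c) {i j : ℕ} (hi : 1 ≤ i) (hij : i < j)
    (hj : j ≤ n) : c i < c j :=
  h.2 ⟨hi, hij.le.trans hj⟩ ⟨hi.trans hij.le, hj⟩ hij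

theorem IsSystem.of_le {m : ℕ} (h : IsSystem n c) (hm : m ≤ n) : IsSystem m c :=
  ⟨h.1, h.2.mono (Set.Icc_subset_Icc_right hm)⟩

theorem IsSystem.coin_pos (h : IsSystem n c) {i : ℕ} (hi : i ∈ Icc 1 n) : 0 < c i := by
  rw [mem_Icc] at hi
  have := h.coin_le_coin le_rfl hi.1 hi.2
  rw [h.1] at this
  omega

theorem IsSystem.grd_eq_grd_sub_top_add_one (h : IsSystem n c) (hn : 1 ≤ n) {v : ℕ}
    (hv : c n ≤ v) : grd n c v = grd n c (v - c n) + 1 :=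
  grd_eq_grd_sub_add_one (right_mem_Icc.mpr hn) hv (h.coin_pos (right_mem_Icc.mpr hn))
    fun _ hi _ => h.coin_le_coin (mem_Icc.mp hi).1 (mem_Icc.mp hi).2 le_rfl

theorem MinCex.opt_lt_opt_sub_top_add_one (hsys : IsSystem (n + 1) c) {w : ℕ}
    (hw : MinCex (n + 1) c w) (hw_top : c (n + 1) ≤ w) :
    opt (n + 1) c w < opt (n + 1) c (w - c (n + 1)) + 1 := by
  have htop : 0 < c (n + 1) := hsys.coin_pos (right_mem_Icc.mpr (by omega))
  have hgrd := hsys.grd_eq_grd_sub_top_add_one (by omega) hw_top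
  rw [hw.opt_eq_grd_of_lt (by omega) hsys.1 (by omega : w - c (n + 1) < w), ← hgrd]
  exact hw.1.2

-- If `w ≥ c n + c (n + 1)` and an optimal representation of `w` uses `c j`, `j ≤ n`, then
-- greedy, which is optimal on `w - c j`, takes the top coin there; so `w` has an optimal
-- representation using the top coin, which `opt_lt_opt_sub_top_add_one` rules out.
theorem MinCex.lt_add_top (hsys : IsSystem (n + 1) c) {w : ℕ} (hw : MinCex (n + 1) c w) :
    w < c n + c (n + 1) := by
  by_contra! hle
  have hn1 : 1 ≤ n + 1 := by omega
  have hmin := hw.opt_lt_opt_sub_top_add_one hsys (by omega)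
  obtain ⟨j, hj, hjw, hoptj⟩ := exists_coin_opt_sub_add_one_eq hn1 hsys.1 hw.1.1
  obtain rfl | hjn : j = n + 1 ∨ j ∈ Icc 1 n := by
    rw [mem_Icc] at hj ⊢; omega
  · omega
  have hj0 := hsys.coin_pos hj
  have hcj : c j ≤ c n := hsys.coin_le_coin (mem_Icc.mp hjn).1 (mem_Icc.mp hjn).2 (by omega)
  have hrest : w - c (n + 1) - c j + c j = w - c (n + 1) := Nat.sub_add_cancel (by omega)
  have hadd := opt_add_coin_le hn1 hsys.1 hj (w - c (n + 1) - c j)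
  rw [hrest, Nat.sub_right_comm] at hadd
  have hgrd := hsys.grd_eq_grd_sub_top_add_one hn1 (by omega : c (n + 1) ≤ w - c j)
  have hopt₁ := hw.opt_eq_grd_of_lt hn1 hsys.1 (by omega : w - c j < w)
  have hopt₂ := hw.opt_eq_grd_of_lt hn1 hsys.1 (by omega : w - c j - c (n + 1) < w)
  omega

theorem Canonical.exists_coin_eq_two_mul_sub_top (hsys : IsSystem (n + 1) c)
    (hC : Canonical (n + 1) c) (hn : 1 ≤ n) (hlt : c (n + 1) < 2 * c n) :
    ∃ j ∈ Icc 1 (n + 1), c j = 2 * c n - c (n + 1) := by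
  have hn1 : 1 ≤ n + 1 := by omega
  have hcn : n ∈ Icc 1 (n + 1) := mem_Icc.mpr ⟨hn, by omega⟩
  have htwo : opt (n + 1) c (0 + c n + c n) ≤ 2 := by
    have h₁ := opt_add_coin_le hn1 hsys.1 hcn (0 + c n)
    have h₂ := opt_add_coin_le hn1 hsys.1 hcn 0
    rw [opt_zero] at h₂
    omega
  have hr : 0 < 2 * c n - c (n + 1) := by omega
  -- greedy pays `2 * c n` with the top coin first and uses at most two coins in all
  rw [zero_add, ← two_mul, hC _ (by have := hsys.coin_pos hcn; omega),
    hsys.grd_eq_grd_sub_top_add_one hn1 hlt.le] at htwo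
  exact exists_coin_eq_of_grd_eq_one hn1 hsys.1 hr (le_antisymm (by omega) (grd_pos hn1 hsys.1 hr))

theorem exists_coin_eq_two_mul_sub (hsys : IsSystem (n + 2) c) (hn : 1 ≤ n)
    (hC : Canonical (n + 2) c) (hC' : ¬Canonical (n + 1) c) :
    ∃ j ∈ Icc 2 n, c (n + 2) = 2 * c (n + 1) - c j := by
  obtain ⟨w, hw⟩ := exists_minCex_of_not_canonical (by omega) hsys.1 hC'
  have hw_ge : c (n + 2) ≤ w := hw.1.le_of_canonical_succ hC
  have hw_lt : w < c n + c (n + 1) := hw.lt_add_top (hsys.of_le (by omega))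
  have hlt : c n < c (n + 1) := hsys.coin_lt_coin hn (by omega) (by omega)
  have hlt' : c (n + 1) < c (n + 2) := hsys.coin_lt_coin (by omega) (by omega) le_rfl
  obtain ⟨j, hj, hcj⟩ : ∃ j ∈ Icc 1 (n + 2), c j = 2 * c (n + 1) - c (n + 2) :=
    hC.exists_coin_eq_two_mul_sub_top hsys (by omega) (show c (n + 2) < 2 * c (n + 1) by omega)
  rw [mem_Icc] at hj
  have hj2 : 2 ≤ j := by
    by_contra! h
    obtain rfl : j = 1 := by omega
    have := hsys.1
    omega
  have hjn : j ≤ n := by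
    by_contra! h
    have := hsys.coin_le_coin (by omega) (show n + 1 ≤ j by omega) hj.2
    omega
  exact ⟨j, mem_Icc.mpr ⟨hj2, hjn⟩, by omega⟩

end

theorem c6_candidates (c : ℕ → ℕ) (hsys : IsSystem 6 c)
    (hC : Canonical 6 c) (hC' : ¬ Canonical 5 c) :
    c 6 = 2 * c 5 - c 2 ∨ c 6 = 2 * c 5 - c 3 ∨ c 6 = 2 * c 5 - c 4 := by
  obtain ⟨j, hj, hcj⟩ := exists_coin_eq_two_mul_sub (n := 4) hsys (by norm_num) hC hC'
  rw [mem_Icc] at hj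
  obtain ⟨hj2, hj4⟩ := hj
  interval_cases j <;> simp [hcj]
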